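/- arXiv:2310.20635 — 5 statements merged into one kernel-verified Lean document; each statement's English description precedes it below -/
import Mathlib

section
/- In a Jordan algebra J over a field of characteristic zero, for any fixed x, z ∈ J the map ∂_{x,z} : y ↦ (x, y, z) = (x*y)*z − x*(y*z) is a derivation of J, i.e., ∂_{x,z}(a*b) = ∂_{x,z}(a)*b + a*∂_{x,z}(b) for all a, b ∈ J. -/
/-- In a Jordan algebra `J` over a field of characteristic zero, for fixed
`x, z ∈ J` the map `∂_{x,z} : y ↦ (x*y)*z − x*(y*z)` is a derivation of `J`. -/
theorem jordan_inner_map_is_derivation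
    (k : Type*) [Field k] [CharZero k]
    (J : Type*) [AddCommGroup J] [Module k J]
    (m : J →ₗ[k] J →ₗ[k] J)
    (hcomm : ∀ a b : J, m a b = m b a)
    (hjordan : ∀ x y : J, m (m (m x x) y) x = m (m x x) (m y x))
    (x z : J) (D : J → J)
    (hD : ∀ y : J, D y = m (m x y) z - m x (m y z)) :
    ∀ a b : J, D (m a b) = m (D a) b + m a (D b) := by
  intro a b
  have H : ∀ u y : J, m (m (m u u) y) u - m (m u u) (m y u) = 0 := fun u y =>
    sub_eq_zero.mpr (hjordan u y)
  have lin : ∀ p q r y : J,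
      m (m (m p q) y) r + m (m (m q r) y) p + m (m (m r p) y) q
      = m (m p q) (m y r) + m (m q r) (m y p) + m (m r p) (m y q) := by
    intro p q r y
    have h1 := H (p + q + r) y
    have h2 := H (p + q) y
    have h3 := H (q + r) y
    have h4 := H (p + r) y
    have h5 := H p y
    have h6 := H q y
    have h7 := H r y
    simp only [map_add, LinearMap.add_apply] at h1 h2 h3 h4
    have key : (2 : k) • (m (m (m p q) y) r + m (m (m q r) y) p + m (m (m r p) y) q)
        = (2 : k) • (m (m p q) (m y r) + m (m q r) (m y p) + m (m r p) (m y q)) := by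
      linear_combination (norm := module) h1 - h2 - h3 - h4 + h5 + h6 + h7
        + (congrArg (fun t_ => m t_ (m y r)) (hcomm q p))
        - (congrArg (fun t_ => m (m t_ y) q) (hcomm p r))
        - (congrArg (fun t_ => m (m t_ y) r) (hcomm q p))
        - (congrArg (fun t_ => m t_ (m y p)) (hcomm q r))
        - (congrArg (fun t_ => m t_ (m y q)) (hcomm r p))
        - (congrArg (fun t_ => m (m t_ y) p) (hcomm r q))
    exact smul_right_injective J (two_ne_zero) key
  rw [hD (m a b), hD a, hD b]
  simp only [map_sub, LinearMap.sub_apply]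
  linear_combination (norm := module)
    - (lin x a b z)
    + (lin z b a x)
    - (congrArg (fun t_ => m t_ b) (hcomm (m a z) x))
    - (congrArg (fun t_ => m (m t_ x) a) (hcomm z b))
    - (hcomm (m x b) (m a z))
    + (congrArg (fun t_ => m (m x b) t_) (hcomm a z))
    - (hcomm x (m (m a b) z))
    + (hcomm (m z b) (m x a))
    + (congrArg (fun t_ => m (m x t_) z) (hcomm a b))
    - (congrArg (fun t_ => m (m a b) t_) (hcomm z x))
    + (hcomm (m (m x b) z) a)
    - (congrArg (fun t_ => m (m t_ z) a) (hcomm x b))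
    - (congrArg (fun t_ => m t_ (m z a)) (hcomm b x))
    + (congrArg (fun t_ => m a t_) (hcomm x (m b z)))
    - (congrArg (fun t_ => m t_ (m x z)) (hcomm a b))
    - (hcomm (m (m b z) x) a)
    - (congrArg (fun t_ => m t_ z) (hcomm (m b a) x))
end

section
/- Let B be a finite-dimensional k-vector space. Equip the vector space C = k ⊕ (sl₂ ⊗ B) ⊕ (k ⊗ S²(B) ⊕ sl₂ ⊗ Λ²(B)) ⊕ (k ⊗ Λ³(B)) with the commutative product where: (u₁⊗b₁)·(u₂⊗b₂) = K(u₁,u₂)⊗(b₁b₂) + [u₁,u₂]⊗(b₁∧b₂) for degree-1 elements, the product of a degree-1 element u₃⊗b₃ with K(u₁,u₂)⊗(b₁b₂)+[u₁,u₂]⊗(b₁∧b₂) equals K([u₁,u₂],u₃)⊗(b₁∧b₂∧b₃), and all products landing in degree ≥ 4 vanish. Then this product is associative. -/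
open Finset

/-- An element of `C = k ⊕ (sl₂ ⊗ B) ⊕ (k ⊗ S²(B) ⊕ sl₂ ⊗ Λ²(B)) ⊕ (k ⊗ Λ³(B))`.
Here `sl₂ ⊗ V` is realized as the space of traceless 2×2 matrices with entries in `V`
(the tracelessness conditions appear as hypotheses in the theorem below), `S2` plays the
role of `S²(B)`, `L2` of `Λ²(B)` and `L3` of `Λ³(B)`. -/
structure TKKComEl (k B S2 L2 L3 : Type*) where
  /-- the `k`-component (degree 0) -/
  c0 : k
  /-- the `sl₂ ⊗ B`-component (degree 1) -/
  c1 : Matrix (Fin 2) (Fin 2) B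
  /-- the `k ⊗ S²(B)`-component (degree 2) -/
  c2s : S2
  /-- the `sl₂ ⊗ Λ²(B)`-component (degree 2) -/
  c2w : Matrix (Fin 2) (Fin 2) L2
  /-- the `k ⊗ Λ³(B)`-component (degree 3) -/
  c3 : L3

variable {k B S2 L2 L3 : Type*} [Field k] [CharZero k]
  [AddCommGroup B] [Module k B] [AddCommGroup S2] [Module k S2]
  [AddCommGroup L2] [Module k L2] [AddCommGroup L3] [Module k L3]

/-- The commutative product on `C`: for degree-1 elements `u₁⊗b₁`, `u₂⊗b₂` it is
`K(u₁,u₂)⊗(b₁b₂) + [u₁,u₂]⊗(b₁∧b₂)` (in the traceless-matrix realization this reads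
`(1/2)·tr`-pairing into `S²` together with the sign-symmetrized matrix product into
`sl₂ ⊗ Λ²`), a degree-1 element times a degree-2 element is `K([u₁,u₂],u₃)⊗(b₁∧b₂∧b₃)`
(the `(1/2)·tr`-pairing of the `sl₂ ⊗ Λ²`-component against the degree-1 element via the
wedge `Λ² × B → Λ³`), all products landing in degree `≥ 4` vanish, and the `k`-component
acts by scalars. -/
def tkkComMul (s : B →ₗ[k] B →ₗ[k] S2) (w : B →ₗ[k] B →ₗ[k] L2)
    (wdg : L2 →ₗ[k] B →ₗ[k] L3) (x y : TKKComEl k B S2 L2 L3) :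
    TKKComEl k B S2 L2 L3 where
  c0 := x.c0 * y.c0
  c1 := x.c0 • y.c1 + y.c0 • x.c1
  c2s := x.c0 • y.c2s + y.c0 • x.c2s +
    (1/2 : k) • ∑ i : Fin 2, ∑ j : Fin 2, s (x.c1 i j) (y.c1 j i)
  c2w := x.c0 • y.c2w + y.c0 • x.c2w +
    Matrix.of (fun i j =>
      (∑ l : Fin 2, w (x.c1 i l) (y.c1 l j)) + ∑ l : Fin 2, w (y.c1 i l) (x.c1 l j))
  c3 := x.c0 • y.c3 + y.c0 • x.c3 +
    (1/2 : k) • ((∑ i : Fin 2, ∑ j : Fin 2, wdg (x.c2w i j) (y.c1 j i)) +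
      ∑ i : Fin 2, ∑ j : Fin 2, wdg (y.c2w i j) (x.c1 j i))

/-- the product on
`C = k ⊕ (sl₂ ⊗ B) ⊕ (k ⊗ S²(B) ⊕ sl₂ ⊗ Λ²(B)) ⊕ (k ⊗ Λ³(B))` described above is
associative.  Here `s : B × B → S2` is the (symmetric) product `S²(B)`,
`w : B × B → L2` the (alternating) wedge into `Λ²(B)`, and `wdg : L2 × B → L3` the wedge
`Λ²(B) × B → Λ³(B)`, which satisfies the cyclic-invariance property
`(b₁∧b₂)∧b₃ = (b₂∧b₃)∧b₁` of the triple wedge. -/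
theorem tkkComMul_assoc
    (s : B →ₗ[k] B →ₗ[k] S2) (w : B →ₗ[k] B →ₗ[k] L2) (wdg : L2 →ₗ[k] B →ₗ[k] L3)
    (hs : ∀ a b : B, s a b = s b a)
    (hw : ∀ a : B, w a a = 0)
    (hcyc : ∀ a b c : B, wdg (w a b) c = wdg (w b c) a)
    (x y z : TKKComEl k B S2 L2 L3)
    (hx1 : x.c1 0 0 + x.c1 1 1 = 0) (hy1 : y.c1 0 0 + y.c1 1 1 = 0)
    (hz1 : z.c1 0 0 + z.c1 1 1 = 0)
    (hx2 : x.c2w 0 0 + x.c2w 1 1 = 0) (hy2 : y.c2w 0 0 + y.c2w 1 1 = 0)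
    (hz2 : z.c2w 0 0 + z.c2w 1 1 = 0) :
    tkkComMul s w wdg (tkkComMul s w wdg x y) z =
      tkkComMul s w wdg x (tkkComMul s w wdg y z) := by
  have hA : ∀ (a b c d e f : Fin 2),
      wdg (w (z.c1 a b) (y.c1 c d)) (x.c1 e f) =
        wdg (w (y.c1 c d) (x.c1 e f)) (z.c1 a b) := fun _ _ _ _ _ _ => hcyc _ _ _
  have hB : ∀ (a b c d e f : Fin 2),
      wdg (w (y.c1 a b) (z.c1 c d)) (x.c1 e f) =
        wdg (w (x.c1 e f) (y.c1 a b)) (z.c1 c d) :=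
    fun _ _ _ _ _ _ => (hcyc _ _ _).trans (hcyc _ _ _)
  simp only [tkkComMul, TKKComEl.mk.injEq]
  refine ⟨by ring, by module, ?_, ?_, ?_⟩
  · simp only [Fin.sum_univ_two, Matrix.add_apply, Matrix.smul_apply, map_add, map_smul,
      LinearMap.add_apply, LinearMap.smul_apply, smul_add]
    module
  · ext i j
    simp only [Fin.sum_univ_two, Matrix.add_apply, Matrix.smul_apply, Matrix.of_apply,
      map_add, map_smul, LinearMap.add_apply, LinearMap.smul_apply, smul_add]
    module
  · simp only [Fin.sum_univ_two, Matrix.add_apply, Matrix.smul_apply, Matrix.of_apply,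
      map_add, map_smul, LinearMap.add_apply, LinearMap.smul_apply, smul_add, hA, hB]
    module
end

section
/- In the free associative algebra k⟨e, h, f⟩ modulo the two-sided ideal I generated by e·e, f·f, e·h + h·e, h·f + f·h, and e·f + f·e − h·h, the homogeneous component of degree p ≥ 2 has dimension exactly 4, spanned by the cosets of h^p, h^{p−1}e, f·h^{p−1}, and f·h^{p−2}·e. -/
/-!
Using the relations `e h = -h e`, `h f = -f h`, `e f = h² - f e`, `e² = f² = 0`, left
multiplication by a generator maps the span of the normal words `h^(n+2)`, `h^(n+1) e`,
`f h^(n+1)`, `f h^n e` into the span of those of degree `n + 3`; so, starting from the nine words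
of length two, every word of length `n + 2` lies in that span. The four normal words are linearly
independent because `e ↦ E₁₂`, `h ↦ diag(1, -1)`, `f ↦ E₂₁` satisfies the relations and sends
them to `diag(1, ±1)`, `E₁₂`, `E₂₁`, `E₂₂`.
-/

/-- The defining relations of `Ass^TKK(L(2))`: in `k⟨e,h,f⟩` (`e = ι 0`, `h = ι 1`,
`f = ι 2`) we impose `e·e = 0`, `f·f = 0`, `e·h + h·e = 0`, `h·f + f·h = 0`,
`e·f + f·e − h·h = 0`. -/
inductive AssTKKRel (k : Type*) [Field k] :
    FreeAlgebra k (Fin 3) → FreeAlgebra k (Fin 3) → Prop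
  | ee : AssTKKRel k (FreeAlgebra.ι k 0 * FreeAlgebra.ι k 0) 0
  | ff : AssTKKRel k (FreeAlgebra.ι k 2 * FreeAlgebra.ι k 2) 0
  | eh : AssTKKRel k (FreeAlgebra.ι k 0 * FreeAlgebra.ι k 1
      + FreeAlgebra.ι k 1 * FreeAlgebra.ι k 0) 0
  | hf : AssTKKRel k (FreeAlgebra.ι k 1 * FreeAlgebra.ι k 2
      + FreeAlgebra.ι k 2 * FreeAlgebra.ι k 1) 0
  | ef : AssTKKRel k (FreeAlgebra.ι k 0 * FreeAlgebra.ι k 2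
      + FreeAlgebra.ι k 2 * FreeAlgebra.ι k 0
      - FreeAlgebra.ι k 1 * FreeAlgebra.ι k 1) 0

open Submodule Set

structure AssTKKRelations {A : Type*} [Ring A] (E H F : A) : Prop where
  E_mul_E : E * E = 0
  F_mul_F : F * F = 0
  E_mul_H_add : E * H + H * E = 0
  H_mul_F_add : H * F + F * H = 0
  E_mul_F_add : E * F + F * E = H * H

def normalWords {A : Type*} [Monoid A] (E H F : A) (n : ℕ) : Fin 4 → A :=
  ![H ^ (n + 2), H ^ (n + 1) * E, F * H ^ (n + 1), F * H ^ n * E]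

theorem exists_list_prod_eq_normalWords {A : Type*} [Monoid A] (E H F : A) (n : ℕ)
    (i : Fin 4) :
    ∃ l : List (Fin 3), l.length = n + 2 ∧ (l.map ![E, H, F]).prod = normalWords E H F n i := by
  fin_cases i
  · exact ⟨List.replicate (n + 2) 1, by simp, by simp [normalWords]⟩
  · exact ⟨List.replicate (n + 1) 1 ++ [0], by simp, by simp [normalWords]⟩
  · exact ⟨2 :: List.replicate (n + 1) 1, by simp, by simp [normalWords]⟩
  · exact ⟨2 :: (List.replicate n 1 ++ [0]), by simp, by simp [normalWords, mul_assoc]⟩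

namespace AssTKKRelations

variable {A : Type*} [Ring A] {E H F : A} (hR : AssTKKRelations E H F)
include hR

theorem E_mul_H : E * H = -(H * E) := eq_neg_of_add_eq_zero_left hR.E_mul_H_add

theorem H_mul_F : H * F = -(F * H) := eq_neg_of_add_eq_zero_left hR.H_mul_F_add

theorem E_mul_F : E * F = H * H - F * E := eq_sub_of_add_eq hR.E_mul_F_add

theorem E_mul_H_pow (n : ℕ) : E * H ^ n = (-1 : ℤ) ^ n • (H ^ n * E) := by
  induction n with
  | zero => simp
  | succ n ih =>
    rw [pow_succ', ← mul_assoc, hR.E_mul_H, neg_mul, mul_assoc, ih, mul_smul_comm, ← mul_assoc,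
      pow_succ (-1 : ℤ), mul_neg_one, neg_smul]

theorem E_mul_F_mul_H_pow (n : ℕ) :
    E * (F * H ^ n) = H ^ (n + 2) - (-1 : ℤ) ^ n • (F * H ^ n * E) := by
  rw [← mul_assoc, hR.E_mul_F, sub_mul, mul_assoc F, hR.E_mul_H_pow, mul_smul_comm, ← mul_assoc,
    mul_assoc, ← pow_succ', ← pow_succ']

variable (k : Type*) [CommRing k] [Algebra k A]

theorem mul_mem_span_normalWords_zero (a b : Fin 3) :
    ![E, H, F] a * ![E, H, F] b ∈ span k (range (normalWords E H F 0)) := by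
  have mem (i : Fin 4) : normalWords E H F 0 i ∈ span k (range (normalWords E H F 0)) :=
    subset_span (mem_range_self i)
  fin_cases a <;> fin_cases b
  · simp [hR.E_mul_E]
  · simpa [normalWords, hR.E_mul_H] using neg_mem (mem 1)
  · simpa [normalWords, hR.E_mul_F, sq] using sub_mem (mem 0) (mem 3)
  · simpa [normalWords] using mem 1
  · simpa [normalWords, sq] using mem 0
  · simpa [normalWords, hR.H_mul_F] using neg_mem (mem 2)
  · simpa [normalWords] using mem 3
  · simpa [normalWords] using mem 2
  · simp [hR.F_mul_F]

theorem E_mul_normalWords_mem_span (n : ℕ) (i : Fin 4) :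
    E * normalWords E H F n i ∈ span k (range (normalWords E H F (n + 1))) := by
  fin_cases i
  · show E * H ^ (n + 2) ∈ _
    rw [hR.E_mul_H_pow]
    exact zsmul_mem (subset_span (mem_range_self 1)) _
  · show E * (H ^ (n + 1) * E) ∈ _
    rw [← mul_assoc, hR.E_mul_H_pow, smul_mul_assoc, mul_assoc, hR.E_mul_E, mul_zero, smul_zero]
    exact zero_mem _
  · show E * (F * H ^ (n + 1)) ∈ _
    rw [hR.E_mul_F_mul_H_pow]
    exact sub_mem (subset_span (mem_range_self 0)) (zsmul_mem (subset_span (mem_range_self 3)) _)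
  · show E * (F * H ^ n * E) ∈ _
    rw [← mul_assoc, ← mul_assoc, mul_assoc E, hR.E_mul_F_mul_H_pow, sub_mul, smul_mul_assoc,
      mul_assoc _ E, hR.E_mul_E, mul_zero, smul_zero, sub_zero]
    exact subset_span (mem_range_self 1)

theorem H_mul_normalWords_mem_span (n : ℕ) (i : Fin 4) :
    H * normalWords E H F n i ∈ span k (range (normalWords E H F (n + 1))) := by
  fin_cases i
  · show H * H ^ (n + 2) ∈ _
    rw [← pow_succ']
    exact subset_span (mem_range_self 0)
  · show H * (H ^ (n + 1) * E) ∈ _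
    rw [← mul_assoc, ← pow_succ']
    exact subset_span (mem_range_self 1)
  · show H * (F * H ^ (n + 1)) ∈ _
    rw [← mul_assoc, hR.H_mul_F, neg_mul, mul_assoc, ← pow_succ']
    exact neg_mem (subset_span (mem_range_self 2))
  · show H * (F * H ^ n * E) ∈ _
    rw [← mul_assoc, ← mul_assoc, hR.H_mul_F, neg_mul, neg_mul, mul_assoc F, ← pow_succ']
    exact neg_mem (subset_span (mem_range_self 3))

theorem F_mul_normalWords_mem_span (n : ℕ) (i : Fin 4) :
    F * normalWords E H F n i ∈ span k (range (normalWords E H F (n + 1))) := by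
  fin_cases i
  · exact subset_span (mem_range_self 2)
  · show F * (H ^ (n + 1) * E) ∈ _
    rw [← mul_assoc]
    exact subset_span (mem_range_self 3)
  · show F * (F * H ^ (n + 1)) ∈ _
    rw [← mul_assoc, hR.F_mul_F, zero_mul]
    exact zero_mem _
  · show F * (F * H ^ n * E) ∈ _
    rw [← mul_assoc, ← mul_assoc, hR.F_mul_F, zero_mul, zero_mul]
    exact zero_mem _

theorem mul_mem_span_normalWords_succ (a : Fin 3) {n : ℕ} {x : A}
    (hx : x ∈ span k (range (normalWords E H F n))) :
    ![E, H, F] a * x ∈ span k (range (normalWords E H F (n + 1))) := by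
  refine (map_span_le (LinearMap.mulLeft k _) _ _).2 ?_ (mem_map_of_mem hx)
  rintro _ ⟨i, rfl⟩
  fin_cases a
  exacts [hR.E_mul_normalWords_mem_span k n i, hR.H_mul_normalWords_mem_span k n i,
    hR.F_mul_normalWords_mem_span k n i]

theorem list_prod_mem_span_normalWords (n : ℕ) (l : List (Fin 3)) (hl : l.length = n + 2) :
    (l.map ![E, H, F]).prod ∈ span k (range (normalWords E H F n)) := by
  induction n generalizing l with
  | zero =>
    obtain ⟨a, b, rfl⟩ := List.length_eq_two.1 hl
    simpa using hR.mul_mem_span_normalWords_zero k a b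
  | succ n ih =>
    obtain ⟨a, l, rfl⟩ := List.exists_cons_of_length_eq_add_one hl
    rw [List.map_cons, List.prod_cons]
    exact hR.mul_mem_span_normalWords_succ k a (ih l (by simpa using hl))

theorem span_list_prod_eq_span_normalWords (n : ℕ) :
    span k (range fun l : {l : List (Fin 3) // l.length = n + 2} => (l.1.map ![E, H, F]).prod) =
      span k (range (normalWords E H F n)) := by
  refine le_antisymm (span_le.2 ?_) (span_le.2 ?_)
  · rintro _ ⟨l, rfl⟩
    exact hR.list_prod_mem_span_normalWords k n l.1 l.2
  · rintro _ ⟨i, rfl⟩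
    obtain ⟨l, hl, hprod⟩ := exists_list_prod_eq_normalWords E H F n i
    exact subset_span ⟨⟨l, hl⟩, hprod⟩

end AssTKKRelations

theorem map_normalWords {A B G : Type*} [Monoid A] [Monoid B] [FunLike G A B]
    [MonoidHomClass G A B] (φ : G) (E H F : A) (n : ℕ) :
    φ ∘ normalWords E H F n = normalWords (φ E) (φ H) (φ F) n := by
  funext i
  fin_cases i <;> simp [normalWords]

section Quotient

variable (k : Type*) [Field k]

noncomputable abbrev assTKKGen (i : Fin 3) : RingQuot (AssTKKRel k) :=
  RingQuot.mkAlgHom k (AssTKKRel k) (FreeAlgebra.ι k i)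

theorem assTKKRelations_assTKKGen :
    AssTKKRelations (assTKKGen k 0) (assTKKGen k 1) (assTKKGen k 2) where
  E_mul_E := by simpa only [map_mul, map_add, map_sub, map_zero] using
    RingQuot.mkAlgHom_rel k (AssTKKRel.ee (k := k))
  F_mul_F := by simpa only [map_mul, map_add, map_sub, map_zero] using
    RingQuot.mkAlgHom_rel k (AssTKKRel.ff (k := k))
  E_mul_H_add := by simpa only [map_mul, map_add, map_sub, map_zero] using
    RingQuot.mkAlgHom_rel k (AssTKKRel.eh (k := k))
  H_mul_F_add := by simpa only [map_mul, map_add, map_sub, map_zero] using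
    RingQuot.mkAlgHom_rel k (AssTKKRel.hf (k := k))
  E_mul_F_add := sub_eq_zero.1 <| by
    simpa only [map_mul, map_add, map_sub, map_zero] using
      RingQuot.mkAlgHom_rel k (AssTKKRel.ef (k := k))

variable {k} {A : Type*} [Ring A] [Algebra k A] {E H F : A}

noncomputable def AssTKKRelations.liftAlgHom (hR : AssTKKRelations E H F) :
    RingQuot (AssTKKRel k) →ₐ[k] A :=
  RingQuot.liftAlgHom k ⟨FreeAlgebra.lift k ![E, H, F], fun _ _ r => by
    cases r <;> simp [hR.E_mul_E, hR.F_mul_F, hR.E_mul_H_add, hR.H_mul_F_add, hR.E_mul_F_add]⟩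

theorem AssTKKRelations.liftAlgHom_assTKKGen (hR : AssTKKRelations E H F) (i : Fin 3) :
    hR.liftAlgHom (assTKKGen k i) = ![E, H, F] i := by
  simp [liftAlgHom]

end Quotient

section Matrix

variable (k : Type*) [CommRing k]

theorem assTKKRelations_matrix :
    AssTKKRelations (!![0, 1; 0, 0] : Matrix (Fin 2) (Fin 2) k) !![1, 0; 0, -1]
      !![0, 0; 1, 0] where
  E_mul_E := by ext i j; fin_cases i <;> fin_cases j <;> simp
  F_mul_F := by ext i j; fin_cases i <;> fin_cases j <;> simp
  E_mul_H_add := by ext i j; fin_cases i <;> fin_cases j <;> simp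
  H_mul_F_add := by ext i j; fin_cases i <;> fin_cases j <;> simp
  E_mul_F_add := by ext i j; fin_cases i <;> fin_cases j <;> simp

theorem Matrix.pow_diag_one_fin_two (c : k) (n : ℕ) :
    (!![1, 0; 0, c] : Matrix (Fin 2) (Fin 2) k) ^ n = !![1, 0; 0, c ^ n] := by
  induction n with
  | zero => simp [Matrix.one_fin_two]
  | succ n ih => simp [pow_succ, ih]

theorem linearIndependent_normalWords_matrix (n : ℕ) :
    LinearIndependent k (normalWords (!![0, 1; 0, 0] : Matrix (Fin 2) (Fin 2) k)
      !![1, 0; 0, -1] !![0, 0; 1, 0] n) := by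
  rw [Fintype.linearIndependent_iff]
  intro c hc
  have h00 := congrFun (congrFun hc 0) 0
  have h01 := congrFun (congrFun hc 0) 1
  have h10 := congrFun (congrFun hc 1) 0
  have h11 := congrFun (congrFun hc 1) 1
  simp [normalWords, Matrix.pow_diag_one_fin_two, Fin.sum_univ_four] at h00 h01 h10 h11
  intro i
  fin_cases i <;> simp_all

end Matrix

theorem linearIndependent_normalWords_assTKKGen (k : Type*) [Field k] (n : ℕ) :
    LinearIndependent k (normalWords (assTKKGen k 0) (assTKKGen k 1) (assTKKGen k 2) n) := by
  have hR := assTKKRelations_matrix k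
  refine LinearIndependent.of_comp hR.liftAlgHom.toLinearMap ?_
  rw [AlgHom.coe_toLinearMap, map_normalWords, hR.liftAlgHom_assTKKGen, hR.liftAlgHom_assTKKGen,
    hR.liftAlgHom_assTKKGen]
  exact linearIndependent_normalWords_matrix k n

theorem assTKK_degree_component_dim_four_general
    (k : Type*) [Field k]
    (π : FreeAlgebra k (Fin 3) →ₐ[k] RingQuot (AssTKKRel k))
    (hπ : π = RingQuot.mkAlgHom k (AssTKKRel k))
    (e h f : FreeAlgebra k (Fin 3))
    (he : e = FreeAlgebra.ι k 0) (hh : h = FreeAlgebra.ι k 1) (hf : f = FreeAlgebra.ι k 2) :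
    ∀ p : ℕ, 2 ≤ p →
      (Submodule.span k (Set.range fun w : {l : List (Fin 3) // l.length = p} =>
          π ((w.1.map fun i => FreeAlgebra.ι k i).prod)) =
        Submodule.span k {π (h ^ p), π (h ^ (p - 1) * e), π (f * h ^ (p - 1)),
          π (f * h ^ (p - 2) * e)}) ∧
      Module.finrank k (Submodule.span k (Set.range
          fun w : {l : List (Fin 3) // l.length = p} =>
            π ((w.1.map fun i => FreeAlgebra.ι k i).prod))) = 4 := by
  subst hπ he hh hf
  intro p hp
  obtain ⟨n, rfl⟩ := Nat.exists_eq_add_of_le' hp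
  have hgen : (fun i => assTKKGen k i) = ![assTKKGen k 0, assTKKGen k 1, assTKKGen k 2] := by
    funext i
    fin_cases i <;> rfl
  have hwords : span k (range fun w : {l : List (Fin 3) // l.length = n + 2} =>
      RingQuot.mkAlgHom k (AssTKKRel k) ((w.1.map fun i => FreeAlgebra.ι k i).prod)) =
      span k (range (normalWords (assTKKGen k 0) (assTKKGen k 1) (assTKKGen k 2) n)) := by
    simp only [map_list_prod, List.map_map, Function.comp_def]
    rw [hgen]
    exact (assTKKRelations_assTKKGen k).span_list_prod_eq_span_normalWords k n
  rw [hwords, finrank_span_eq_card (linearIndependent_normalWords_assTKKGen k n),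
    Fintype.card_fin]
  refine ⟨congrArg (span k) ?_, rfl⟩
  simp only [normalWords, Matrix.range_cons, Matrix.range_empty, union_empty, singleton_union,
    map_mul, map_pow, Nat.add_one_sub_one, Nat.add_sub_cancel]

/-- In the quotient of `k⟨e,h,f⟩` by the two-sided ideal generated by the
relations above, the homogeneous component of degree `p ≥ 2` (the span of the images of all
words of length `p` in the generators) has dimension exactly `4`, spanned by the cosets of
`h^p`, `h^{p−1}e`, `f·h^{p−1}` and `f·h^{p−2}·e`. -/
theorem assTKK_degree_component_dim_four
    (k : Type*) [Field k] [CharZero k]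
    (π : FreeAlgebra k (Fin 3) →ₐ[k] RingQuot (AssTKKRel k))
    (hπ : π = RingQuot.mkAlgHom k (AssTKKRel k))
    (e h f : FreeAlgebra k (Fin 3))
    (he : e = FreeAlgebra.ι k 0) (hh : h = FreeAlgebra.ι k 1) (hf : f = FreeAlgebra.ι k 2) :
    ∀ p : ℕ, 2 ≤ p →
      (Submodule.span k (Set.range fun w : {l : List (Fin 3) // l.length = p} =>
          π ((w.1.map fun i => FreeAlgebra.ι k i).prod)) =
        Submodule.span k {π (h ^ p), π (h ^ (p - 1) * e), π (f * h ^ (p - 1)),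
          π (f * h ^ (p - 2) * e)}) ∧
      Module.finrank k (Submodule.span k (Set.range
          fun w : {l : List (Fin 3) // l.length = p} =>
            π ((w.1.map fun i => FreeAlgebra.ι k i).prod))) = 4 :=
  assTKK_degree_component_dim_four_general k π hπ e h f he hh hf
end

section
/- The quotient of the free associative algebra k⟨e,h,f⟩ by the two-sided ideal generated by e·e, f·f, e·h + h·e, h·f + f·h, and e·f + f·e − h·h is isomorphic as a graded algebra to the subalgebra k·1 ⊕ (sl₂ ⊗ t) ⊕ ⨁_{p≥2} Mat₂(k)·t^p of Mat₂(k[t]), via e ↦ E·t, h ↦ H·t, f ↦ F·t, where E,F,H are the standard sl₂ matrices. -/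
/-- The scalar matrix `M ∈ Mat₂(k)` scaled by the polynomial `t`, i.e. `M·t ∈ Mat₂(k[t])`. -/
noncomputable def matT {k : Type*} [Field k] (M : Matrix (Fin 2) (Fin 2) k) :
    Matrix (Fin 2) (Fin 2) (Polynomial k) :=
  fun i j => Polynomial.C (M i j) * Polynomial.X

open Polynomial Matrix

namespace AssTKKAux
variable (k : Type*) [Field k]

/-- scalar matrix times X^n -/
noncomputable def TT (n : ℕ) (M : Matrix (Fin 2) (Fin 2) k) :
    Matrix (Fin 2) (Fin 2) (Polynomial k) :=
  (X:k[X])^n • M.map (Polynomial.C : k → k[X])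

variable {k}

lemma TT_apply (n : ℕ) (M : Matrix (Fin 2) (Fin 2) k) (i j : Fin 2) :
    TT k n M i j = Polynomial.C (M i j) * X^n := by
  simp only [TT, Matrix.smul_apply, Matrix.map_apply, smul_eq_mul]
  ring

lemma TT_mul (m n : ℕ) (M N : Matrix (Fin 2) (Fin 2) k) :
    TT k m M * TT k n N = TT k (m+n) (M*N) := by
  ext i j
  simp only [TT_apply, Matrix.mul_apply, Fin.sum_univ_two, pow_add,
    Polynomial.C_add, Polynomial.C_mul]
  ring

lemma TT_add (n : ℕ) (M N : Matrix (Fin 2) (Fin 2) k) :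
    TT k n (M + N) = TT k n M + TT k n N := by
  ext i j
  simp only [TT_apply, Matrix.add_apply, Polynomial.C_add]
  ring

lemma TT_smul (n : ℕ) (a : k) (M : Matrix (Fin 2) (Fin 2) k) :
    TT k n (a • M) = a • TT k n M := by
  ext i j
  simp only [TT_apply, Matrix.smul_apply, smul_eq_mul, Polynomial.C_mul,
    Polynomial.smul_eq_C_mul]
  ring

lemma TT_one : TT k 0 1 = 1 := by
  ext i j
  simp only [TT_apply, pow_zero, mul_one, Matrix.one_apply]
  split <;> simp

lemma TT_zero (n : ℕ) : TT k n 0 = 0 := by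
  ext i j; simp [TT_apply]

lemma matT_eq_TT (M : Matrix (Fin 2) (Fin 2) k) : matT M = TT k 1 M := by
  ext i j; simp [matT, TT_apply]

end AssTKKAux
namespace AssTKKAux
variable (k : Type*) [Field k]

noncomputable def E0 : Matrix (Fin 2) (Fin 2) k := !![0, 1; 0, 0]
noncomputable def H0 : Matrix (Fin 2) (Fin 2) k := !![1, 0; 0, -1]
noncomputable def F0 : Matrix (Fin 2) (Fin 2) k := !![0, 0; 1, 0]

variable {k}

lemma E0_mul_E0 : E0 k * E0 k = 0 := by
  ext i j; fin_cases i <;> fin_cases j <;>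
    simp [E0, Matrix.mul_apply, Fin.sum_univ_two]
lemma F0_mul_F0 : F0 k * F0 k = 0 := by
  ext i j; fin_cases i <;> fin_cases j <;>
    simp [F0, Matrix.mul_apply, Fin.sum_univ_two]
lemma H0_mul_H0 : H0 k * H0 k = 1 := by
  ext i j; fin_cases i <;> fin_cases j <;>
    simp [H0, Matrix.mul_apply, Fin.sum_univ_two, Matrix.one_apply]
lemma E0_mul_H0 : E0 k * H0 k = -E0 k := by
  ext i j; fin_cases i <;> fin_cases j <;>
    simp [E0, H0, Matrix.mul_apply, Fin.sum_univ_two]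
lemma H0_mul_E0 : H0 k * E0 k = E0 k := by
  ext i j; fin_cases i <;> fin_cases j <;>
    simp [E0, H0, Matrix.mul_apply, Fin.sum_univ_two]
lemma H0_mul_F0 : H0 k * F0 k = -F0 k := by
  ext i j; fin_cases i <;> fin_cases j <;>
    simp [F0, H0, Matrix.mul_apply, Fin.sum_univ_two]
lemma F0_mul_H0 : F0 k * H0 k = F0 k := by
  ext i j; fin_cases i <;> fin_cases j <;>
    simp [F0, H0, Matrix.mul_apply, Fin.sum_univ_two]
lemma EF_add_FE : E0 k * F0 k + F0 k * E0 k = E0 k * F0 k + F0 k * E0 k := rfl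
lemma E0_mul_F0 : E0 k * F0 k = !![1,0;0,0] := by
  ext i j; fin_cases i <;> fin_cases j <;>
    simp [E0, F0, Matrix.mul_apply, Fin.sum_univ_two]
lemma F0_mul_E0 : F0 k * E0 k = !![0,0;0,1] := by
  ext i j; fin_cases i <;> fin_cases j <;>
    simp [E0, F0, Matrix.mul_apply, Fin.sum_univ_two]
lemma EF_FE_HH : E0 k * F0 k + F0 k * E0 k - H0 k * H0 k = 0 := by
  rw [E0_mul_F0, F0_mul_E0, H0_mul_H0]
  ext i j; fin_cases i <;> fin_cases j <;> simp [Matrix.one_apply]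

variable (k)

/-- the map from the free algebra -/
noncomputable def ψ : FreeAlgebra k (Fin 3) →ₐ[k] Matrix (Fin 2) (Fin 2) (Polynomial k) :=
  FreeAlgebra.lift k ![TT k 1 (E0 k), TT k 1 (H0 k), TT k 1 (F0 k)]

lemma ψ_e : ψ k (FreeAlgebra.ι k 0) = TT k 1 (E0 k) := by
  simp [ψ, FreeAlgebra.lift_ι_apply]
lemma ψ_h : ψ k (FreeAlgebra.ι k 1) = TT k 1 (H0 k) := by
  simp [ψ, FreeAlgebra.lift_ι_apply]
lemma ψ_f : ψ k (FreeAlgebra.ι k 2) = TT k 1 (F0 k) := by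
  simp [ψ, FreeAlgebra.lift_ι_apply]

lemma TT_sub (n : ℕ) (M N : Matrix (Fin 2) (Fin 2) k) :
    TT k n (M - N) = TT k n M - TT k n N := by
  ext i j
  simp only [TT_apply, Matrix.sub_apply, Polynomial.C_sub]
  ring

lemma ψ_rel : ∀ ⦃x y : FreeAlgebra k (Fin 3)⦄, AssTKKRel k x y → ψ k x = ψ k y := by
  intro x y r
  induction r with
  | ee => rw [_root_.map_mul, ψ_e, TT_mul, E0_mul_E0, TT_zero, map_zero]
  | ff => rw [_root_.map_mul, ψ_f, TT_mul, F0_mul_F0, TT_zero, map_zero]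
  | eh =>
      rw [_root_.map_add, _root_.map_mul, _root_.map_mul, ψ_e, ψ_h, TT_mul, TT_mul, ← TT_add,
        E0_mul_H0, H0_mul_E0, neg_add_cancel, TT_zero, map_zero]
  | hf =>
      rw [_root_.map_add, _root_.map_mul, _root_.map_mul, ψ_h, ψ_f, TT_mul, TT_mul, ← TT_add,
        H0_mul_F0, F0_mul_H0, neg_add_cancel, TT_zero, map_zero]
  | ef =>
      rw [map_sub, _root_.map_add, _root_.map_mul, _root_.map_mul, _root_.map_mul, ψ_e, ψ_h, ψ_f,
        TT_mul, TT_mul, TT_mul, ← TT_add, ← TT_sub, EF_FE_HH, TT_zero, map_zero]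

/-- the induced map on the quotient -/
noncomputable def φ : RingQuot (AssTKKRel k) →ₐ[k] Matrix (Fin 2) (Fin 2) (Polynomial k) :=
  RingQuot.liftAlgHom k ⟨ψ k, ψ_rel k⟩

lemma φ_mk (x : FreeAlgebra k (Fin 3)) :
    φ k (RingQuot.mkAlgHom k (AssTKKRel k) x) = ψ k x :=
  RingQuot.liftAlgHom_mkAlgHom_apply k (ψ k) (ψ_rel k) x

lemma φ_e : φ k (RingQuot.mkAlgHom k (AssTKKRel k) (FreeAlgebra.ι k 0)) = TT k 1 (E0 k) := by
  rw [φ_mk, ψ_e]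
lemma φ_h : φ k (RingQuot.mkAlgHom k (AssTKKRel k) (FreeAlgebra.ι k 1)) = TT k 1 (H0 k) := by
  rw [φ_mk, ψ_h]
lemma φ_f : φ k (RingQuot.mkAlgHom k (AssTKKRel k) (FreeAlgebra.ι k 2)) = TT k 1 (F0 k) := by
  rw [φ_mk, ψ_f]

end AssTKKAux
namespace AssTKKAux
variable (k : Type*) [Field k]

noncomputable def eR : RingQuot (AssTKKRel k) :=
  RingQuot.mkAlgHom k (AssTKKRel k) (FreeAlgebra.ι k 0)
noncomputable def hR : RingQuot (AssTKKRel k) :=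
  RingQuot.mkAlgHom k (AssTKKRel k) (FreeAlgebra.ι k 1)
noncomputable def fR : RingQuot (AssTKKRel k) :=
  RingQuot.mkAlgHom k (AssTKKRel k) (FreeAlgebra.ι k 2)

variable {k}

lemma rel_of (x y : FreeAlgebra k (Fin 3)) (h : AssTKKRel k x y) :
    RingQuot.mkAlgHom k (AssTKKRel k) x = RingQuot.mkAlgHom k (AssTKKRel k) y :=
  RingQuot.mkAlgHom_rel k h

lemma ee_zero : eR k * eR k = 0 := by
  have := rel_of _ _ (AssTKKRel.ee (k := k))
  rwa [_root_.map_mul, map_zero] at this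

lemma ff_zero : fR k * fR k = 0 := by
  have := rel_of _ _ (AssTKKRel.ff (k := k))
  rwa [_root_.map_mul, map_zero] at this

lemma he_eq : hR k * eR k = -(eR k * hR k) := by
  have := rel_of _ _ (AssTKKRel.eh (k := k))
  rw [_root_.map_add, _root_.map_mul, _root_.map_mul, map_zero] at this
  rw [eq_neg_iff_add_eq_zero]
  rw [add_comm] at this
  exact this

lemma hf_eq : hR k * fR k = -(fR k * hR k) := by
  have := rel_of _ _ (AssTKKRel.hf (k := k))
  rw [_root_.map_add, _root_.map_mul, _root_.map_mul, map_zero] at this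
  rw [eq_neg_iff_add_eq_zero]
  exact this

lemma fe_eq : fR k * eR k = hR k * hR k - eR k * fR k := by
  have := rel_of _ _ (AssTKKRel.ef (k := k))
  rw [map_sub, _root_.map_add, _root_.map_mul, _root_.map_mul, _root_.map_mul,
    map_zero, sub_eq_zero] at this
  rw [eq_sub_iff_add_eq, add_comm]
  exact this

lemma rq_mul_neg (a b : RingQuot (AssTKKRel k)) : a * -b = -(a * b) := mul_neg a b
lemma rq_neg_mul (a b : RingQuot (AssTKKRel k)) : (-a) * b = -(a * b) := neg_mul a b
lemma rq_smul_mul (c : k) (a b : RingQuot (AssTKKRel k)) : (c • a) * b = c • (a * b) :=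
  smul_mul_assoc c a b
lemma rq_mul_smul (c : k) (a b : RingQuot (AssTKKRel k)) : a * (c • b) = c • (a * b) :=
  mul_smul_comm c a b
lemma rq_neg_smul (c : k) (a : RingQuot (AssTKKRel k)) : -(c • a) = (-c) • a :=
  (neg_smul c a).symm
lemma rq_neg_eq : ∀ a : RingQuot (AssTKKRel k), -a = ((-1 : k)) • a := by
  intro a; rw [← rq_neg_smul, one_smul]

/-- powers of h move past e with sign -/
lemma hp_e (p : ℕ) : hR k ^ p * eR k = ((-1 : k) ^ p) • (eR k * hR k ^ p) := by
  induction p with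
  | zero => simp
  | succ p ih =>
      rw [pow_succ, mul_assoc (hR k ^ p), he_eq, rq_mul_neg, ← mul_assoc, ih,
        rq_smul_mul, rq_neg_smul, mul_assoc, ← pow_succ,
        show (-(-1 : k) ^ p) = (-1 : k) ^ (p + 1) by ring]

lemma hp_f (p : ℕ) : hR k ^ p * fR k = ((-1 : k) ^ p) • (fR k * hR k ^ p) := by
  induction p with
  | zero => simp
  | succ p ih =>
      rw [pow_succ, mul_assoc (hR k ^ p), hf_eq, rq_mul_neg, ← mul_assoc, ih,
        rq_smul_mul, rq_neg_smul, mul_assoc, ← pow_succ,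
        show (-(-1 : k) ^ p) = (-1 : k) ^ (p + 1) by ring]

end AssTKKAux
namespace AssTKKAux
variable (k : Type*) [Field k]

/-- the spanning family of the quotient -/
noncomputable def v : ℕ × Fin 4 → RingQuot (AssTKKRel k) := fun q =>
  ![hR k ^ q.1, eR k * hR k ^ q.1, fR k * hR k ^ q.1, eR k * fR k * hR k ^ q.1] q.2

noncomputable def W : Submodule k (RingQuot (AssTKKRel k)) :=
  Submodule.span k (Set.range (v k))

variable {k}

lemma v_mem (q : ℕ × Fin 4) : v k q ∈ W k :=
  Submodule.subset_span (Set.mem_range_self q)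

lemma v0 (p : ℕ) : v k (p, 0) = hR k ^ p := rfl
lemma v1 (p : ℕ) : v k (p, 1) = eR k * hR k ^ p := rfl
lemma v2 (p : ℕ) : v k (p, 2) = fR k * hR k ^ p := rfl
lemma v3 (p : ℕ) : v k (p, 3) = eR k * fR k * hR k ^ p := rfl

lemma h_ef : hR k * (eR k * fR k) = (eR k * fR k) * hR k := by
  rw [← mul_assoc, he_eq, rq_neg_mul, mul_assoc, hf_eq, rq_mul_neg, neg_neg, ← mul_assoc]

lemma hh_f : (hR k * hR k) * fR k = fR k * (hR k * hR k) := by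
  rw [mul_assoc, hf_eq, rq_mul_neg, ← mul_assoc, hf_eq, rq_neg_mul, neg_neg, mul_assoc]

lemma e_v0 (q : ℕ) : eR k * v k (q, 0) ∈ W k := v_mem (q, 1)
lemma e_v1 (q : ℕ) : eR k * v k (q, 1) ∈ W k := by
  rw [v1, ← mul_assoc, ee_zero, zero_mul]; exact (W k).zero_mem
lemma e_v2 (q : ℕ) : eR k * v k (q, 2) ∈ W k := by
  rw [v2, ← mul_assoc]; exact v_mem (q, 3)
lemma e_v3 (q : ℕ) : eR k * v k (q, 3) ∈ W k := by
  rw [v3, ← mul_assoc, ← mul_assoc, ee_zero, zero_mul, zero_mul]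
  exact (W k).zero_mem

lemma h_v0 (q : ℕ) : hR k * v k (q, 0) ∈ W k := by
  rw [v0, ← pow_succ']; exact v_mem (q+1, 0)
lemma h_v1 (q : ℕ) : hR k * v k (q, 1) ∈ W k := by
  rw [v1, ← mul_assoc, he_eq, rq_neg_mul, rq_neg_eq, mul_assoc, ← pow_succ']
  exact (W k).smul_mem _ (v_mem (q+1, 1))
lemma h_v2 (q : ℕ) : hR k * v k (q, 2) ∈ W k := by
  rw [v2, ← mul_assoc, hf_eq, rq_neg_mul, rq_neg_eq, mul_assoc, ← pow_succ']
  exact (W k).smul_mem _ (v_mem (q+1, 2))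
lemma h_v3 (q : ℕ) : hR k * v k (q, 3) ∈ W k := by
  rw [v3, ← mul_assoc, h_ef, mul_assoc, ← pow_succ']
  exact v_mem (q+1, 3)

lemma f_v0 (q : ℕ) : fR k * v k (q, 0) ∈ W k := v_mem (q, 2)
lemma f_v1 (q : ℕ) : fR k * v k (q, 1) ∈ W k := by
  rw [v1, ← mul_assoc, fe_eq, sub_mul,
    mul_assoc (hR k) (hR k) (hR k ^ q), ← pow_succ', ← pow_succ']
  exact (W k).sub_mem (v_mem (q+1+1, 0)) (v_mem (q, 3))
lemma f_v2 (q : ℕ) : fR k * v k (q, 2) ∈ W k := by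
  rw [v2, ← mul_assoc, ff_zero, zero_mul]; exact (W k).zero_mem
lemma f_v3 (q : ℕ) : fR k * v k (q, 3) ∈ W k := by
  rw [v3, ← mul_assoc, ← mul_assoc, fe_eq, sub_mul, sub_mul,
    mul_assoc (eR k) (fR k) (fR k), ff_zero, mul_zero, zero_mul, sub_zero,
    hh_f, mul_assoc (fR k) (hR k * hR k) (hR k ^ q),
    mul_assoc (hR k) (hR k) (hR k ^ q), ← pow_succ', ← pow_succ']
  exact v_mem (q+1+1, 2)

lemma mul_stable (x : RingQuot (AssTKKRel k)) (hx : ∀ q, x * v k q ∈ W k) :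
    ∀ w ∈ W k, x * w ∈ W k := by
  intro w hw
  induction hw using Submodule.span_induction with
  | mem w hw => obtain ⟨q, rfl⟩ := hw; exact hx q
  | zero => rw [mul_zero]; exact (W k).zero_mem
  | add a b _ _ ha hb => rw [mul_add]; exact (W k).add_mem ha hb
  | smul c a _ ha => rw [rq_mul_smul]; exact (W k).smul_mem c ha

lemma key_mul (y : FreeAlgebra k (Fin 3)) :
    ∀ w ∈ W k, (RingQuot.mkAlgHom k (AssTKKRel k) y) * w ∈ W k := by
  induction y using FreeAlgebra.induction with
  | grade0 r =>
      intro w hw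
      rw [AlgHom.commutes, ← Algebra.smul_def]
      exact (W k).smul_mem r hw
  | grade1 i =>
      fin_cases i
      · exact mul_stable (eR k) (fun q => by
          rcases q with ⟨p, j⟩
          fin_cases j
          exacts [e_v0 p, e_v1 p, e_v2 p, e_v3 p])
      · exact mul_stable (hR k) (fun q => by
          rcases q with ⟨p, j⟩
          fin_cases j
          exacts [h_v0 p, h_v1 p, h_v2 p, h_v3 p])
      · exact mul_stable (fR k) (fun q => by
          rcases q with ⟨p, j⟩
          fin_cases j
          exacts [f_v0 p, f_v1 p, f_v2 p, f_v3 p])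
  | mul a b ha hb =>
      intro w hw
      rw [_root_.map_mul, mul_assoc]
      exact ha _ (hb w hw)
  | add a b ha hb =>
      intro w hw
      rw [_root_.map_add, add_mul]
      exact (W k).add_mem (ha w hw) (hb w hw)

lemma W_top : ∀ x : RingQuot (AssTKKRel k), x ∈ W k := by
  intro x
  obtain ⟨y, rfl⟩ := RingQuot.mkAlgHom_surjective k (AssTKKRel k) x
  have h1 : (1 : RingQuot (AssTKKRel k)) ∈ W k := by
    have := v_mem (k := k) (0, 0)
    rwa [v0, pow_zero] at this
  have := key_mul y 1 h1
  rwa [mul_one] at this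

end AssTKKAux
namespace AssTKKAux
variable {k : Type*} [Field k]

lemma TT_pow (M : Matrix (Fin 2) (Fin 2) k) (p : ℕ) :
    (TT k 1 M) ^ p = TT k p (M ^ p) := by
  induction p with
  | zero => rw [pow_zero, pow_zero, TT_one]
  | succ p ih => rw [pow_succ, ih, TT_mul, pow_succ]

lemma H0_pow (p : ℕ) : H0 k ^ p = !![1, 0; 0, (-1 : k) ^ p] := by
  induction p with
  | zero =>
      rw [pow_zero, pow_zero]
      ext i j; fin_cases i <;> fin_cases j <;> simp [Matrix.one_apply]
  | succ p ih =>
      rw [pow_succ, ih]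
      ext i j; fin_cases i <;> fin_cases j <;>
        simp [H0, Matrix.mul_apply, Fin.sum_univ_two, pow_succ]

lemma E0_mul_diag (p : ℕ) : E0 k * !![1, 0; 0, (-1 : k) ^ p] = !![0, (-1 : k) ^ p; 0, 0] := by
  ext i j; fin_cases i <;> fin_cases j <;>
    simp [E0, Matrix.mul_apply, Fin.sum_univ_two]

lemma F0_mul_diag (p : ℕ) : F0 k * !![1, 0; 0, (-1 : k) ^ p] = !![0, 0; 1, 0] := by
  ext i j; fin_cases i <;> fin_cases j <;>
    simp [F0, Matrix.mul_apply, Fin.sum_univ_two]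

lemma EF_mul_diag (p : ℕ) :
    (E0 k * F0 k) * !![1, 0; 0, (-1 : k) ^ p] = !![1, 0; 0, 0] := by
  rw [E0_mul_F0]
  ext i j; fin_cases i <;> fin_cases j <;>
    simp [Matrix.mul_apply, Fin.sum_univ_two]

lemma φ_hp (p : ℕ) : φ k (hR k ^ p) = TT k p !![1, 0; 0, (-1 : k) ^ p] := by
  rw [map_pow, hR, φ_h, TT_pow, H0_pow]

lemma φv0 (p : ℕ) : φ k (v k (p, 0)) = TT k p !![1, 0; 0, (-1 : k) ^ p] := by
  rw [v0, φ_hp]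

lemma φv1 (p : ℕ) : φ k (v k (p, 1)) = TT k (p + 1) !![0, (-1 : k) ^ p; 0, 0] := by
  rw [v1, _root_.map_mul, φ_hp, eR, φ_e, TT_mul, E0_mul_diag, add_comm]

lemma φv2 (p : ℕ) : φ k (v k (p, 2)) = TT k (p + 1) !![0, 0; 1, 0] := by
  rw [v2, _root_.map_mul, φ_hp, fR, φ_f, TT_mul, F0_mul_diag, add_comm]

lemma φv3 (p : ℕ) : φ k (v k (p, 3)) = TT k (p + 2) !![1, 0; 0, 0] := by
  rw [v3, _root_.map_mul, _root_.map_mul, φ_hp, eR, fR, φ_e, φ_f, TT_mul, TT_mul,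
    EF_mul_diag, add_comm]

/-- coordinate functionals -/
noncomputable def coordL (i j : Fin 2) (n : ℕ) :
    Matrix (Fin 2) (Fin 2) (Polynomial k) →ₗ[k] k where
  toFun M := (M i j).coeff n
  map_add' M N := by simp [Matrix.add_apply]
  map_smul' c M := by simp [Matrix.smul_apply]

lemma coordL_TT (i j : Fin 2) (n m : ℕ) (M : Matrix (Fin 2) (Fin 2) k) :
    coordL i j n (TT k m M) = if n = m then M i j else 0 := by
  simp only [coordL, LinearMap.coe_mk, AddHom.coe_mk, TT_apply,
    Polynomial.coeff_C_mul, Polynomial.coeff_X_pow]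
  split <;> simp_all

end AssTKKAux
namespace AssTKKAux
variable {k : Type*} [Field k]

lemma coeffs_zero (l : (ℕ × Fin 4) →₀ k)
    (hl : (l.sum fun q c => c • φ k (v k q)) = 0) : l = 0 := by
  have key : ∀ (i j : Fin 2) (n : ℕ),
      (l.sum fun q c => c * coordL i j n (φ k (v k q))) = 0 := by
    intro i j n
    have h2 := congrArg (coordL i j n) hl
    rw [map_finsuppSum, map_zero] at h2
    simpa only [LinearMap.map_smul, smul_eq_mul] using h2
  have hA : ∀ p, l (p, 0) = 0 := by
    intro p
    have h := key 1 1 p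
    rw [Finsupp.sum_eq_single (p, (0 : Fin 4))] at h
    · rw [φv0, coordL_TT, if_pos rfl] at h
      have h1 : ((-1 : k) ^ p) ≠ 0 := pow_ne_zero _ (neg_ne_zero.mpr one_ne_zero)
      have h2 : (!![1, 0; 0, (-1 : k) ^ p]) 1 1 = (-1 : k) ^ p := by simp
      rw [h2] at h
      rcases mul_eq_zero.mp h with h' | h'
      · exact h'
      · exact absurd h' h1
    · rintro ⟨p', j'⟩ - hne
      fin_cases j' <;>
        simp only [Fin.zero_eta, Fin.mk_one, Fin.reduceFinMk, Fin.isValue] at hne ⊢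
      · rcases eq_or_ne p p' with rfl | hp
        · exact absurd rfl hne
        · rw [φv0, coordL_TT, if_neg hp, mul_zero]
      · rw [φv1, coordL_TT]; split <;> simp
      · rw [φv2, coordL_TT]; split <;> simp
      · rw [φv3, coordL_TT]; split <;> simp
    · simp
  have hB : ∀ p, l (p, 1) = 0 := by
    intro p
    have h := key 0 1 (p + 1)
    rw [Finsupp.sum_eq_single (p, (1 : Fin 4))] at h
    · rw [φv1, coordL_TT, if_pos rfl] at h
      have h1 : ((-1 : k) ^ p) ≠ 0 := pow_ne_zero _ (neg_ne_zero.mpr one_ne_zero)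
      have h2 : (!![0, (-1 : k) ^ p; 0, 0]) 0 1 = (-1 : k) ^ p := by simp
      rw [h2] at h
      rcases mul_eq_zero.mp h with h' | h'
      · exact h'
      · exact absurd h' h1
    · rintro ⟨p', j'⟩ - hne
      fin_cases j' <;>
        simp only [Fin.zero_eta, Fin.mk_one, Fin.reduceFinMk, Fin.isValue] at hne ⊢
      · rw [φv0, coordL_TT]; split <;> simp
      · rcases eq_or_ne p p' with rfl | hp
        · exact absurd rfl hne
        · rw [φv1, coordL_TT, if_neg (by omega), mul_zero]
      · rw [φv2, coordL_TT]; split <;> simp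
      · rw [φv3, coordL_TT]; split <;> simp
    · simp
  have hC : ∀ p, l (p, 2) = 0 := by
    intro p
    have h := key 1 0 (p + 1)
    rw [Finsupp.sum_eq_single (p, (2 : Fin 4))] at h
    · rw [φv2, coordL_TT, if_pos rfl] at h
      simpa using h
    · rintro ⟨p', j'⟩ - hne
      fin_cases j' <;>
        simp only [Fin.zero_eta, Fin.mk_one, Fin.reduceFinMk, Fin.isValue] at hne ⊢
      · rw [φv0, coordL_TT]; split <;> simp
      · rw [φv1, coordL_TT]; split <;> simp
      · rcases eq_or_ne p p' with rfl | hp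
        · exact absurd rfl hne
        · rw [φv2, coordL_TT, if_neg (by omega), mul_zero]
      · rw [φv3, coordL_TT]; split <;> simp
    · simp
  have hD : ∀ p, l (p, 3) = 0 := by
    intro p
    have h := key 0 0 (p + 2)
    rw [Finsupp.sum_eq_single (p, (3 : Fin 4))] at h
    · rw [φv3, coordL_TT, if_pos rfl] at h
      simpa using h
    · rintro ⟨p', j'⟩ hne0 hne
      fin_cases j' <;>
        simp only [Fin.zero_eta, Fin.mk_one, Fin.reduceFinMk, Fin.isValue] at hne ⊢
      · exact absurd (hA p') hne0
      · rw [φv1, coordL_TT]; split <;> simp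
      · rw [φv2, coordL_TT]; split <;> simp
      · rcases eq_or_ne p p' with rfl | hp
        · exact absurd rfl hne
        · rw [φv3, coordL_TT, if_neg (by omega), mul_zero]
    · simp
  ext q
  rcases q with ⟨p, j⟩
  fin_cases j
  exacts [hA p, hB p, hC p, hD p]

lemma φ_inj : Function.Injective (φ k) := by
  intro x y hxy
  have hW := W_top (k := k) (x - y)
  rw [W, Finsupp.mem_span_range_iff_exists_finsupp] at hW
  obtain ⟨c, hc⟩ := hW
  have hz : (c.sum fun q a => a • φ k (v k q)) = 0 := by
    have h2 := congrArg (φ k) hc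
    rw [map_finsuppSum] at h2
    simp only [_root_.map_smul] at h2
    rw [h2, map_sub, hxy, sub_self]
  have hc0 := coeffs_zero c hz
  rw [hc0, Finsupp.sum_zero_index] at hc
  exact sub_eq_zero.mp hc.symm

end AssTKKAux
namespace AssTKKAux
variable (k : Type*) [Field k]

/-- the target set as a submodule -/
noncomputable def SubS : Submodule k (Matrix (Fin 2) (Fin 2) (Polynomial k)) where
  carrier := {M | (∃ c : k, M.map (fun p => p.coeff 0) = c • (1 : Matrix (Fin 2) (Fin 2) k)) ∧
      Matrix.trace (M.map fun p => p.coeff 1) = 0}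
  add_mem' := by
    rintro M N ⟨⟨c, hc⟩, hM⟩ ⟨⟨d, hd⟩, hN⟩
    refine ⟨⟨c + d, ?_⟩, ?_⟩
    · rw [Matrix.map_add _ (fun a b => Polynomial.coeff_add a b 0) M N, hc, hd, add_smul]
    · rw [Matrix.map_add _ (fun a b => Polynomial.coeff_add a b 1) M N, Matrix.trace_add,
        hM, hN, add_zero]
  zero_mem' := by
    refine ⟨⟨0, ?_⟩, ?_⟩
    · rw [Matrix.map_zero _ rfl, zero_smul]
    · rw [Matrix.map_zero _ rfl, Matrix.trace_zero]
  smul_mem' := by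
    rintro r M ⟨⟨c, hc⟩, hM⟩
    refine ⟨⟨r * c, ?_⟩, ?_⟩
    · rw [Matrix.map_smul _ r (fun a => Polynomial.coeff_smul r a 0) M, hc, smul_smul]
    · rw [Matrix.map_smul _ r (fun a => Polynomial.coeff_smul r a 1) M, Matrix.trace_smul,
        hM, smul_zero]

variable {k}

lemma TT_map_coeff (m n : ℕ) (M : Matrix (Fin 2) (Fin 2) k) :
    (TT k m M).map (fun p => p.coeff n) = if n = m then M else 0 := by
  ext i j
  rw [Matrix.map_apply, TT_apply, Polynomial.coeff_C_mul, Polynomial.coeff_X_pow]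
  split <;> simp_all

lemma φv_mem_SubS (q : ℕ × Fin 4) : φ k (v k q) ∈ SubS k := by
  rcases q with ⟨p, j⟩
  have h2 : ∀ (m : ℕ) (M : Matrix (Fin 2) (Fin 2) k), 2 ≤ m → TT k m M ∈ SubS k := by
    intro m M hm
    refine ⟨⟨0, ?_⟩, ?_⟩
    · rw [TT_map_coeff, if_neg (by omega), zero_smul]
    · rw [TT_map_coeff, if_neg (by omega), Matrix.trace_zero]
  fin_cases j <;> simp only [Fin.zero_eta, Fin.mk_one, Fin.reduceFinMk, Fin.isValue]
  · rw [φv0]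
    match p with
    | 0 =>
        refine ⟨⟨1, ?_⟩, ?_⟩
        · rw [TT_map_coeff, if_pos rfl, one_smul]
          ext i j; fin_cases i <;> fin_cases j <;> simp [Matrix.one_apply]
        · rw [TT_map_coeff, if_neg (by omega), Matrix.trace_zero]
    | 1 =>
        refine ⟨⟨0, ?_⟩, ?_⟩
        · rw [TT_map_coeff, if_neg (by omega), zero_smul]
        · rw [TT_map_coeff, if_pos rfl, Matrix.trace_fin_two_of]
          norm_num
    | (p + 2) => exact h2 _ _ (by omega)
  · rw [φv1]
    match p with
    | 0 =>
        refine ⟨⟨0, ?_⟩, ?_⟩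
        · rw [TT_map_coeff, if_neg (by omega), zero_smul]
        · rw [TT_map_coeff, if_pos rfl, Matrix.trace_fin_two_of, add_zero]
    | (p + 1) => exact h2 _ _ (by omega)
  · rw [φv2]
    match p with
    | 0 =>
        refine ⟨⟨0, ?_⟩, ?_⟩
        · rw [TT_map_coeff, if_neg (by omega), zero_smul]
        · rw [TT_map_coeff, if_pos rfl, Matrix.trace_fin_two_of, add_zero]
    | (p + 1) => exact h2 _ _ (by omega)
  · rw [φv3]
    exact h2 _ _ (by omega)

lemma range_subset (x : RingQuot (AssTKKRel k)) : φ k x ∈ SubS k := by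
  have hW := W_top (k := k) x
  rw [W, Finsupp.mem_span_range_iff_exists_finsupp] at hW
  obtain ⟨c, hc⟩ := hW
  rw [← hc, map_finsuppSum]
  refine Submodule.sum_mem _ fun q hq => ?_
  show φ k (c q • v k q) ∈ SubS k
  rw [_root_.map_smul]
  exact (SubS k).smul_mem _ (φv_mem_SubS q)

end AssTKKAux
namespace AssTKKAux
variable {k : Type*} [Field k]

lemma A_mem : TT k 1 (E0 k) ∈ (φ k).range := (AlgHom.mem_range _).mpr ⟨eR k, φ_e k⟩
lemma B_mem : TT k 1 (H0 k) ∈ (φ k).range := (AlgHom.mem_range _).mpr ⟨hR k, φ_h k⟩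
lemma C_mem : TT k 1 (F0 k) ∈ (φ k).range := (AlgHom.mem_range _).mpr ⟨fR k, φ_f k⟩

lemma TT_neg (n : ℕ) (M : Matrix (Fin 2) (Fin 2) k) : TT k n (-M) = -TT k n M := by
  ext i j
  simp only [TT_apply, Matrix.neg_apply, Polynomial.C_neg]
  ring

lemma TT2_mem (M : Matrix (Fin 2) (Fin 2) k) : TT k 2 M ∈ (φ k).range := by
  have hdec : M = M 0 0 • (E0 k * F0 k) + M 0 1 • E0 k + M 1 0 • F0 k
      + M 1 1 • (F0 k * E0 k) := by
    rw [E0_mul_F0, F0_mul_E0]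
    ext i j; fin_cases i <;> fin_cases j <;> simp [E0, F0]
  rw [hdec, TT_add, TT_add, TT_add, TT_smul, TT_smul, TT_smul, TT_smul]
  have m1 : TT k 2 (E0 k * F0 k) ∈ (φ k).range := by
    have h := TT_mul (k := k) 1 1 (E0 k) (F0 k)
    rw [← h]; exact mul_mem A_mem C_mem
  have m4 : TT k 2 (F0 k * E0 k) ∈ (φ k).range := by
    have h := TT_mul (k := k) 1 1 (F0 k) (E0 k)
    rw [← h]; exact mul_mem C_mem A_mem
  have m2 : TT k 2 (E0 k) ∈ (φ k).range := by
    have h : TT k 2 (E0 k) = -(TT k 1 (E0 k) * TT k 1 (H0 k)) := by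
      rw [TT_mul, E0_mul_H0, TT_neg, neg_neg]
    rw [h]; exact neg_mem (mul_mem A_mem B_mem)
  have m3 : TT k 2 (F0 k) ∈ (φ k).range := by
    have h : TT k 2 (F0 k) = -(TT k 1 (H0 k) * TT k 1 (F0 k)) := by
      rw [TT_mul, H0_mul_F0, TT_neg, neg_neg]
    rw [h]; exact neg_mem (mul_mem B_mem C_mem)
  exact add_mem (add_mem (add_mem ((φ k).range.smul_mem m1 _) ((φ k).range.smul_mem m2 _))
    ((φ k).range.smul_mem m3 _)) ((φ k).range.smul_mem m4 _)

lemma TTn_mem (n : ℕ) (hn : 2 ≤ n) (M : Matrix (Fin 2) (Fin 2) k) :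
    TT k n M ∈ (φ k).range := by
  obtain ⟨m, rfl⟩ : ∃ m, n = m + 2 := ⟨n - 2, by omega⟩
  clear hn
  induction m generalizing M with
  | zero => exact TT2_mem M
  | succ m ih =>
      have h : TT k (m + 1 + 2) M = TT k (m + 2) (M * H0 k) * TT k 1 (H0 k) := by
        rw [TT_mul, mul_assoc, H0_mul_H0, mul_one]
      rw [h]
      exact mul_mem (ih _) B_mem

lemma TT1_traceless (M : Matrix (Fin 2) (Fin 2) k) (h : Matrix.trace M = 0) :
    TT k 1 M ∈ (φ k).range := by
  have h' : M 1 1 = -(M 0 0) := by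
    rw [Matrix.trace_fin_two] at h; exact eq_neg_of_add_eq_zero_right h
  have hdec : M = M 0 1 • E0 k + M 0 0 • H0 k + M 1 0 • F0 k := by
    ext i j; fin_cases i <;> fin_cases j <;> simp [E0, H0, F0, h']
  rw [hdec, TT_add, TT_add, TT_smul, TT_smul, TT_smul]
  exact add_mem (add_mem ((φ k).range.smul_mem A_mem _) ((φ k).range.smul_mem B_mem _))
    ((φ k).range.smul_mem C_mem _)

lemma std_mem (i j : Fin 2) (p : Polynomial k) (h0 : p.coeff 0 = 0) (h1 : p.coeff 1 = 0) :
    Matrix.single i j p ∈ (φ k).range := by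
  have hsum : Matrix.single i j p
      = ∑ n ∈ p.support, p.coeff n • TT k n (Matrix.single i j 1) := by
    refine Matrix.ext fun a b => ?_
    rw [Matrix.sum_apply]
    by_cases hab : i = a ∧ j = b
    · simp only [Matrix.single, Matrix.of_apply, hab, if_true, and_self,
        Matrix.smul_apply, TT_apply, if_pos]
      conv_lhs => rw [Polynomial.as_sum_support_C_mul_X_pow p]
      refine Finset.sum_congr rfl fun n hn => ?_
      rw [Polynomial.smul_eq_C_mul, Polynomial.C_1, one_mul]
    · simp only [Matrix.single, Matrix.of_apply, hab, if_false,
        Matrix.smul_apply, TT_apply]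
      exact (Finset.sum_eq_zero (fun n hn => by simp)).symm
  rw [hsum]
  refine sum_mem fun n hn => (φ k).range.smul_mem (TTn_mem n ?_ _) _
  rw [Polynomial.mem_support_iff] at hn
  rcases n with _ | _ | n
  · exact absurd h0 hn
  · exact absurd h1 hn
  · omega

lemma mem_SubS_iff (M : Matrix (Fin 2) (Fin 2) (Polynomial k)) :
    M ∈ SubS k ↔ (∃ c : k, M.map (fun p => p.coeff 0) = c • (1 : Matrix (Fin 2) (Fin 2) k)) ∧
      Matrix.trace (M.map fun p => p.coeff 1) = 0 := Iff.rfl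

lemma mem_range_of (M : Matrix (Fin 2) (Fin 2) (Polynomial k)) (hM : M ∈ SubS k) :
    M ∈ (φ k).range := by
  obtain ⟨⟨c, hc⟩, htr⟩ := hM
  set M1 : Matrix (Fin 2) (Fin 2) k := M.map (fun p => p.coeff 1) with hM1
  set N : Matrix (Fin 2) (Fin 2) (Polynomial k) :=
    M - c • (1 : Matrix (Fin 2) (Fin 2) (Polynomial k)) - TT k 1 M1 with hN
  have hNmem : N ∈ (φ k).range := by
    rw [Matrix.matrix_eq_sum_single N]
    refine sum_mem fun i _ => sum_mem fun j _ => std_mem i j _ ?_ ?_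
    · have hce : (M i j).coeff 0 = c • (1 : Matrix (Fin 2) (Fin 2) k) i j := by
        have := congrFun (congrFun hc i) j
        simpa [Matrix.map_apply] using this
      simp only [hN, Matrix.sub_apply, Polynomial.coeff_sub, hce, TT_apply,
        Matrix.smul_apply, Polynomial.coeff_smul, Matrix.one_apply,
        Polynomial.coeff_C_mul, Polynomial.coeff_X_pow]
      by_cases hij : i = j <;>
        simp [hij, Polynomial.coeff_one, smul_eq_mul]
    · have h1e : (M1 : Matrix (Fin 2) (Fin 2) k) i j = (M i j).coeff 1 := rfl
      simp only [hN, Matrix.sub_apply, Polynomial.coeff_sub, TT_apply,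
        Matrix.smul_apply, Polynomial.coeff_smul, Matrix.one_apply,
        Polynomial.coeff_C_mul, Polynomial.coeff_X_pow, h1e]
      by_cases hij : i = j <;>
        simp [hij, Polynomial.coeff_one, smul_eq_mul]
  have h1 : c • (1 : Matrix (Fin 2) (Fin 2) (Polynomial k)) ∈ (φ k).range :=
    (φ k).range.smul_mem (one_mem _) c
  have h2 : TT k 1 M1 ∈ (φ k).range := TT1_traceless M1 htr
  have hMe : M = N + c • (1 : Matrix (Fin 2) (Fin 2) (Polynomial k)) + TT k 1 M1 := by
    rw [hN]; abel
  rw [hMe]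
  exact add_mem (add_mem hNmem h1) h2

end AssTKKAux

/-- The quotient of `k⟨e,h,f⟩` by the two-sided ideal generated by `e·e`,
`f·f`, `e·h + h·e`, `h·f + f·h`, `e·f + f·e − h·h` is isomorphic, as a graded algebra, to
the subalgebra `k·1 ⊕ (sl₂ ⊗ t) ⊕ ⨁_{p≥2} Mat₂(k)·t^p` of `Mat₂(k[t])` — the matrices
whose degree-0 term is scalar and whose degree-1 term is traceless — via
`e ↦ E·t`, `h ↦ H·t`, `f ↦ F·t`. -/
theorem assTKK_iso_matrix_subalgebra
    (k : Type*) [Field k] [CharZero k]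
    (π : FreeAlgebra k (Fin 3) →ₐ[k] RingQuot (AssTKKRel k))
    (hπ : π = RingQuot.mkAlgHom k (AssTKKRel k)) :
    ∃ φ : RingQuot (AssTKKRel k) →ₐ[k] Matrix (Fin 2) (Fin 2) (Polynomial k),
      Function.Injective φ ∧
      φ (π (FreeAlgebra.ι k 0)) = matT !![0, 1; 0, 0] ∧
      φ (π (FreeAlgebra.ι k 1)) = matT !![1, 0; 0, -1] ∧
      φ (π (FreeAlgebra.ι k 2)) = matT !![0, 0; 1, 0] ∧
      Set.range φ = {M : Matrix (Fin 2) (Fin 2) (Polynomial k) |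
        (∃ c : k, M.map (fun p => p.coeff 0) = c • (1 : Matrix (Fin 2) (Fin 2) k)) ∧
        Matrix.trace (M.map fun p => p.coeff 1) = 0} := by
  
  subst hπ
  refine ⟨AssTKKAux.φ k, AssTKKAux.φ_inj, ?_, ?_, ?_, ?_⟩
  · rw [AssTKKAux.matT_eq_TT]
    exact AssTKKAux.φ_e k
  · rw [AssTKKAux.matT_eq_TT]
    exact AssTKKAux.φ_h k
  · rw [AssTKKAux.matT_eq_TT]
    exact AssTKKAux.φ_f k
  · ext M
    simp only [Set.mem_range, Set.mem_setOf_eq]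
    constructor
    · rintro ⟨x, rfl⟩
      exact AssTKKAux.range_subset x
    · intro hM
      exact (AlgHom.mem_range _).mp (AssTKKAux.mem_range_of M hM)
end

section
/- Let g be a Lie algebra containing sl₂ (with basis e,f,h) as a subalgebra, such that as an sl₂-module g is a direct sum of trivial and adjoint representations. Let J = {v ∈ g : [h,v] = 2v} be the weight-2 subspace. Then the product x • y := (1/2)[x, [f, y]] on J is commutative: (1/2)[x,[f,y]] = (1/2)[y,[f,x]] for all x, y ∈ J. -/
/-- Let `g` be a Lie algebra over a field of characteristic zero containing
`sl₂ = span(e,f,h)` as a subalgebra (`[e,f]=h`, `[h,e]=2e`, `[h,f]=−2f`), such that as an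
`sl₂`-module `g` decomposes as a direct sum of trivial and adjoint representations (so `h`
acts semisimply with eigenvalues `0, 2, −2`).  On the weight-2 subspace
`J = {v : [h,v] = 2v}`, the product `x • y := (1/2)[x,[f,y]]` is commutative. -/
theorem tits_product_commutative
    (k : Type*) [Field k] [CharZero k]
    (g : Type*) [LieRing g] [LieAlgebra k g]
    (e f h : g)
    (hef : ⁅e, f⁆ = h) (hhe : ⁅h, e⁆ = (2 : k) • e) (hhf : ⁅h, f⁆ = (-2 : k) • f)
    (hdecomp : ∀ v : g, ∃ a b c : g,
      v = a + b + c ∧ ⁅h, a⁆ = 0 ∧ ⁅h, b⁆ = (2 : k) • b ∧ ⁅h, c⁆ = (-2 : k) • c) :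
    ∀ x y : g, ⁅h, x⁆ = (2 : k) • x → ⁅h, y⁆ = (2 : k) • y →
      (1/2 : k) • ⁅x, ⁅f, y⁆⁆ = (1/2 : k) • ⁅y, ⁅f, x⁆⁆ := by
  intro x y hx hy
  -- ⁅x, y⁆ has weight 4
  have h4 : ⁅h, ⁅x, y⁆⁆ = (4 : k) • ⁅x, y⁆ := by
    rw [leibniz_lie, hx, hy, smul_lie, lie_smul]
    module
  -- a weight-4 vector must vanish
  have hxy : ⁅x, y⁆ = 0 := by
    obtain ⟨a, b, c, hv, ha, hb, hc⟩ := hdecomp ⁅x, y⁆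
    have e1 : (4 : k) • a + (2 : k) • b + (6 : k) • c = 0 := by
      have := h4
      rw [hv, lie_add, lie_add, ha, hb, hc] at this
      -- 0 + 2b + (-2)c = 4(a+b+c)
      have : (2 : k) • b + (-2 : k) • c = (4 : k) • (a + b + c) := by
        rw [← this]; abel
      rw [smul_add, smul_add] at this
      linear_combination (norm := module) -this
    have e2 : (4 : k) • b + (-12 : k) • c = 0 := by
      have := congrArg (fun z => ⁅h, z⁆) e1
      simp only [lie_add, lie_smul, ha, hb, hc, lie_zero, smul_zero] at this
      linear_combination (norm := module) this
    have e3 : (8 : k) • b + (24 : k) • c = 0 := by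
      have := congrArg (fun z => ⁅h, z⁆) e2
      simp only [lie_add, lie_smul, hb, hc, lie_zero] at this
      linear_combination (norm := module) this
    have hb0 : b = 0 := by
      have : (48 : k) • b = 0 := by linear_combination (norm := module) (3:k) • e3 + (6:k) • e2
      have := smul_eq_zero.mp this
      rcases this with h' | h'
      · exact absurd h' (by norm_num)
      · exact h'
    have hc0 : c = 0 := by
      rw [hb0, smul_zero, zero_add] at e2
      rcases smul_eq_zero.mp e2 with h' | h'
      · exact absurd h' (by norm_num)
      · exact h'
    have ha0 : a = 0 := by
      have : (4 : k) • a = 0 := by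
        rw [hb0, hc0] at e1; simpa using e1
      rcases smul_eq_zero.mp this with h' | h'
      · exact absurd h' (by norm_num)
      · exact h'
    rw [hv, ha0, hb0, hc0]; simp
  -- Jacobi identity
  have jac : ⁅x, ⁅f, y⁆⁆ = ⁅⁅x, f⁆, y⁆ + ⁅f, ⁅x, y⁆⁆ := leibniz_lie x f y
  rw [jac, hxy, lie_zero, add_zero]
  congr 1
  rw [← lie_skew x f, neg_lie, ← lie_skew ⁅f, x⁆ y, neg_neg]
end
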